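/- Consider the linear program inf_ρ,h ρ subject to ρ ≥ r(s,u) + ∫ h(s')Q(ds'|s,u) − h(s) for all feasible (s,u). If (ρ, h) is feasible for this LP and (ν, φ) is an equilibrium (ν = F(ν,φ), φ(U(s)|s) = 1), with r and h suitably integrable, then ρ ≥ r̄(ν, φ) = ∫∫ r(s,u) φ(du|s) dν(s). Hence the optimal LP value is an upper bound on the optimal equilibrium reward (weak duality between the average-reward LP and the equilibrium problem). -/

import Mathlib

/-!
Integrate the LP constraint against the state-action measure `ν ⊗ₘ φ`, which charges only
feasible pairs. The relative-value terms `∫ h dQ(·|s,u)` and `h s` then have the same average: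
the image of `ν ⊗ₘ φ` under `Q` is `F(ν, φ) = ν`, and so is its first marginal. What remains is
`r̄(ν, φ) ≤ ρ`.
-/

open MeasureTheory ProbabilityTheory

/-- The measurized (deterministic) transition. -/
noncomputable def measurizedF {S U : Type*} [MeasurableSpace S] [MeasurableSpace U]
    (Q : Kernel (S × U) S) (φ : Kernel S U) (ν : Measure S) : Measure S :=
  ν.bind (fun s => (φ s).bind (fun u => Q (s, u)))

/-- The measurized reward `r̄(ν, φ)`. -/
noncomputable def measurizedReward {S U : Type*} [MeasurableSpace S] [MeasurableSpace U]
    (r : S × U → ℝ) (φ : Kernel S U) (ν : Measure S) : ℝ :=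
  ∫ s, ∫ u, r (s, u) ∂(φ s) ∂ν

section Bounded

variable {α : Type*} [MeasurableSpace α] {μ : Measure α} {f : α → ℝ} {C : ℝ}

lemma integrable_of_abs_le [IsFiniteMeasure μ] (hf : Measurable f) (hC : ∀ x, |f x| ≤ C) :
    Integrable f μ :=
  .of_bound hf.aestronglyMeasurable C (.of_forall hC)

lemma abs_integral_le_of_abs_le [IsProbabilityMeasure μ] (hC : ∀ x, |f x| ≤ C) :
    |∫ x, f x ∂μ| ≤ C := by
  simpa using norm_integral_le_of_norm_le_const (μ := μ) (f := f) (.of_forall hC)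

end Bounded

namespace MeasureTheory.Measure

variable {α β : Type*} [MeasurableSpace α] [MeasurableSpace β] {μ : Measure α} {κ : Kernel α β}
  {E : Type*} [NormedAddCommGroup E] [NormedSpace ℝ E]

lemma integral_comp [SFinite μ] [IsSFiniteKernel κ] {f : β → E} (hf : Integrable f (κ ∘ₘ μ)) :
    ∫ b, f b ∂(κ ∘ₘ μ) = ∫ a, ∫ b, f b ∂(κ a) ∂μ := by
  rw [← snd_compProd] at hf ⊢
  rw [snd, integral_map measurable_snd.aemeasurable hf.aestronglyMeasurable,
    integral_compProd (f := fun p => f p.2) (hf.comp_measurable measurable_snd)]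

lemma integral_fst_compProd [SFinite μ] [IsMarkovKernel κ] {f : α → E}
    (hf : AEStronglyMeasurable f μ) : ∫ p, f p.1 ∂(μ ⊗ₘ κ) = ∫ a, f a ∂μ := by
  rw [← fst_compProd μ κ] at hf
  conv_rhs => rw [← fst_compProd μ κ]
  rw [fst, integral_map measurable_fst.aemeasurable hf]

lemma ae_compProd_of_forall_mem [IsMarkovKernel κ] {p : α × β → Prop}
    (hp : MeasurableSet {x | p x}) {A : α → Set β} (hA : ∀ a, MeasurableSet (A a))
    (hκA : ∀ a, κ a (A a) = 1) (h : ∀ a, ∀ b ∈ A a, p (a, b)) : ∀ᵐ x ∂(μ ⊗ₘ κ), p x := by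
  refine ae_compProd_of_ae_ae hp (.of_forall fun a => ?_)
  have hmem : ∀ᵐ b ∂(κ a), b ∈ A a := by
    rw [ae_mem_iff_measure_eq (hA a).nullMeasurableSet, hκA a, measure_univ]
  filter_upwards [hmem] with b hb using h a b hb

end MeasureTheory.Measure

lemma measurizedF_eq_comp_compProd {S U : Type*} [MeasurableSpace S] [MeasurableSpace U]
    (Q : Kernel (S × U) S) (φ : Kernel S U) [IsSFiniteKernel φ] (ν : Measure S) [SFinite ν] :
    measurizedF Q φ ν = Q ∘ₘ (ν ⊗ₘ φ) := by
  have hQ : ∀ s, Measurable fun u => Q (s, u) := fun s => Q.measurable.comp measurable_prodMk_left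
  have hmeas : Measurable fun s => (φ s).bind (fun u => Q (s, u)) := by
    refine Measure.measurable_of_measurable_coe _ fun A hA => ?_
    simp_rw [Measure.bind_apply hA (hQ _).aemeasurable]
    exact (Q.measurable_coe hA).lintegral_kernel_prod_right'
  ext A hA
  rw [measurizedF, Measure.bind_apply hA hmeas.aemeasurable, Measure.bind_apply hA Q.aemeasurable,
    Measure.lintegral_compProd (Q.measurable_coe hA)]
  refine lintegral_congr fun s => ?_
  rw [Measure.bind_apply hA (hQ s).aemeasurable]

/-- Weak duality between the average-reward LP and the
equilibrium problem: if `(ρ, h)` is feasible for the LP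
(`ρ ≥ r(s,u) + ∫ h dQ(·|s,u) − h(s)` on the feasibility set) and `(ν, φ)` is a
feasible equilibrium, then `ρ ≥ r̄(ν, φ)`. -/
theorem stmt18 {S U : Type*} [MeasurableSpace S] [MeasurableSpace U]
    (Q : Kernel (S × U) S) [IsMarkovKernel Q]
    (Uset : S → Set U) (hUm : ∀ s, MeasurableSet (Uset s))
    (r : S × U → ℝ) (hrm : Measurable r) (C : ℝ) (hrb : ∀ p, |r p| ≤ C)
    (ρ : ℝ) (h : S → ℝ) (hhm : Measurable h) (Ch : ℝ) (hhb : ∀ s, |h s| ≤ Ch)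
    (hfeas : ∀ s, ∀ u ∈ Uset s,
      r (s, u) + (∫ s', h s' ∂(Q (s, u))) - h s ≤ ρ)
    (ν : Measure S) [IsProbabilityMeasure ν]
    (φ : Kernel S U) [IsMarkovKernel φ] (hφfeas : ∀ s, φ s (Uset s) = 1)
    (hinv : measurizedF Q φ ν = ν) :
    measurizedReward r φ ν ≤ ρ := by
  set Qh : S × U → ℝ := fun p => ∫ s', h s' ∂(Q p)
  have hQhm : Measurable Qh := (hhm.stronglyMeasurable.integral_kernel (κ := Q)).measurable
  have hr : Integrable r (ν ⊗ₘ φ) := integrable_of_abs_le hrm hrb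
  have hQh : Integrable Qh (ν ⊗ₘ φ) :=
    integrable_of_abs_le hQhm fun p => abs_integral_le_of_abs_le hhb
  have hh : Integrable (fun p : S × U => h p.1) (ν ⊗ₘ φ) :=
    integrable_of_abs_le (hhm.comp measurable_fst) fun p => hhb p.1
  have hgap : ∀ᵐ p ∂(ν ⊗ₘ φ), r p + Qh p - h p.1 ≤ ρ :=
    Measure.ae_compProd_of_forall_mem (measurableSet_le (by fun_prop) measurable_const) hUm
      hφfeas hfeas
  have hcancel : ∫ p, Qh p ∂(ν ⊗ₘ φ) = ∫ p, h p.1 ∂(ν ⊗ₘ φ) := by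
    rw [← Measure.integral_comp (integrable_of_abs_le hhm hhb), ← measurizedF_eq_comp_compProd,
      hinv, Measure.integral_fst_compProd hhm.aestronglyMeasurable]
  calc measurizedReward r φ ν
      = ∫ p, (r p + Qh p - h p.1) ∂(ν ⊗ₘ φ) := by
        rw [integral_sub (f := fun p => r p + Qh p) (hr.add hQh) hh, integral_add hr hQh,
          hcancel, add_sub_cancel_right, Measure.integral_compProd hr, measurizedReward]
    _ ≤ ∫ _, ρ ∂(ν ⊗ₘ φ) := integral_mono_ae ((hr.add hQh).sub hh) (integrable_const ρ) hgap
    _ = ρ := by simp
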